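/- Let g = g_{5,3,4}. For every F ∈ g*, the skew-symmetric bilinear form B_F has rank either 0 or 2; equivalently, the subspace {X ∈ g : F([X, Y]) = 0 for all Y ∈ g} has dimension 5 or 3. (This is the infinitesimal MD-condition: every coadjoint orbit of the corresponding connected simply connected Lie group G_{5,3,4} has dimension 0 or 2, so it is an MD5-group.) -/

import Mathlib

open scoped Matrix

/-- The Lie bracket of g_{5,3,4}: [X1,X2] = X3, [X2,X3] = X3, [X2,X4] = X4, [X2,X5] = X5,
written in coordinates with respect to the basis (X₁, X₂, X₃, X₄, X₅) (all other
brackets of basis vectors vanish); it is the bilinear extension of the structure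
constants above. -/
def bracketg534 (U V : Fin 5 → ℝ) : Fin 5 → ℝ :=
  ![0, 0,
    (U 0 * V 1 - U 1 * V 0) + (U 1 * V 2 - U 2 * V 1),
    U 1 * V 3 - U 3 * V 1,
    U 1 * V 4 - U 4 * V 1]

/-- The matrix (in the basis (X₁, ..., X₅)) of the skew-symmetric bilinear form
B_F(X, Y) = F([X, Y]); the functional F is identified with its coordinate vector with
respect to the dual basis, acting by the dot product. -/
def BFg534 (F : Fin 5 → ℝ) : Matrix (Fin 5) (Fin 5) ℝ :=
  Matrix.of fun i j => F ⬝ᵥ bracketg534 (Pi.single i 1) (Pi.single j 1)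

/-- The radical {X ∈ g | F([X, Y]) = 0 for all Y ∈ g} of the form B_F, as a subspace. -/
def radg534 (F : Fin 5 → ℝ) : Submodule ℝ (Fin 5 → ℝ) where
  carrier := {X | ∀ Y : Fin 5 → ℝ, F ⬝ᵥ bracketg534 X Y = 0}
  zero_mem' := by
    intro Y
    simp [bracketg534, dotProduct, Fin.sum_univ_five]
  add_mem' := by
    intro a b ha hb Y
    have h1 := ha Y
    have h2 := hb Y
    simp only [bracketg534, dotProduct, Fin.sum_univ_five, Matrix.cons_val_zero,
      Matrix.cons_val_one, Matrix.head_cons, Matrix.cons_val_two, Matrix.tail_cons,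
      Matrix.cons_val_three, Matrix.cons_val_four, Pi.add_apply] at h1 h2 ⊢
    linear_combination h1 + h2
  smul_mem' := by
    intro c a ha Y
    have h1 := ha Y
    simp only [bracketg534, dotProduct, Fin.sum_univ_five, Matrix.cons_val_zero,
      Matrix.cons_val_one, Matrix.head_cons, Matrix.cons_val_two, Matrix.tail_cons,
      Matrix.cons_val_three, Matrix.cons_val_four, Pi.smul_apply, smul_eq_mul] at h1 ⊢
    linear_combination c * h1

/-! Every nonzero bracket involves `X₂`, so `𝔞 = span {X₁, X₃, X₄, X₅}` is an abelian ideal of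
codimension one. Hence `B_F(X, Y) = X₂*(X) ℓ(Y) - ℓ(X) X₂*(Y)` with `ℓ = F ∘ ad X₂`: the form is
the wedge product of two covectors. As `ℓ` vanishes on `X₂`, the pair `X₂*, ℓ` is linearly
independent unless `ℓ = 0`, and the wedge of two independent covectors has rank 2 and a radical of
codimension 2, while `ℓ = 0` gives `B_F = 0`. -/

namespace Matrix

variable {K n : Type*} [Field K] [Fintype n]

theorem rank_add_finrank_ker_mulVecLin {m : Type*} (A : Matrix m n K) :
    A.rank + Module.finrank K (LinearMap.ker A.mulVecLin) = Fintype.card n := by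
  rw [rank, LinearMap.finrank_range_add_finrank_ker, Module.finrank_fintype_fun_eq_card]

theorem vecMulVec_sub_vecMulVec_mulVec (u v x : n → K) :
    (vecMulVec u v - vecMulVec v u) *ᵥ x = (v ⬝ᵥ x) • u - (u ⬝ᵥ x) • v := by
  simp [sub_mulVec, vecMulVec_mulVec]

theorem ker_mulVecLin_vecMulVec_sub_vecMulVec {u v : n → K} (h : LinearIndependent K ![u, v]) :
    LinearMap.ker (vecMulVec u v - vecMulVec v u).mulVecLin =
      LinearMap.ker (of ![u, v]).mulVecLin := by
  ext x
  simp only [LinearMap.mem_ker, mulVecLin_apply, vecMulVec_sub_vecMulVec_mulVec]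
  constructor
  · intro hx
    rw [sub_eq_add_neg, ← neg_smul] at hx
    obtain ⟨hv, hu⟩ := LinearIndependent.pair_iff.mp h _ _ hx
    ext i
    fin_cases i <;> simp_all [mulVec]
  · intro hx
    have hu : u ⬝ᵥ x = 0 := congrFun hx 0
    have hv : v ⬝ᵥ x = 0 := congrFun hx 1
    simp [hu, hv]

theorem rank_vecMulVec_sub_vecMulVec {u v : n → K} (h : LinearIndependent K ![u, v]) :
    (vecMulVec u v - vecMulVec v u).rank = 2 := by
  have hwedge := rank_add_finrank_ker_mulVecLin (vecMulVec u v - vecMulVec v u)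
  have hpair := rank_add_finrank_ker_mulVecLin (of ![u, v])
  rw [ker_mulVecLin_vecMulVec_sub_vecMulVec h] at hwedge
  rw [LinearIndependent.rank_matrix (M := of ![u, v]) h, Fintype.card_fin] at hpair
  omega

end Matrix

open Matrix

/-- The covector `Y ↦ F([X₂, Y])`. -/
def adX2Dual (F : Fin 5 → ℝ) : Fin 5 → ℝ := ![-F 2, 0, F 2, F 3, F 4]

theorem dotProduct_bracketg534 (F X Y : Fin 5 → ℝ) :
    F ⬝ᵥ bracketg534 X Y =
      (Pi.single 1 1 ⬝ᵥ X) * (adX2Dual F ⬝ᵥ Y) - (adX2Dual F ⬝ᵥ X) * (Pi.single 1 1 ⬝ᵥ Y) := by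
  simp [bracketg534, adX2Dual, dotProduct, Fin.sum_univ_five]
  ring

theorem BFg534_eq_vecMulVec_sub_vecMulVec (F : Fin 5 → ℝ) :
    BFg534 F =
      vecMulVec (Pi.single 1 1) (adX2Dual F) - vecMulVec (adX2Dual F) (Pi.single 1 1) := by
  ext i j
  simp [BFg534, dotProduct_bracketg534, vecMulVec_apply, mul_comm]

theorem radg534_eq_ker (F : Fin 5 → ℝ) :
    radg534 F = LinearMap.ker (BFg534 F).mulVecLin := by
  ext X
  have hskew (Y : Fin 5 → ℝ) : F ⬝ᵥ bracketg534 X Y = -(Y ⬝ᵥ BFg534 F *ᵥ X) := by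
    rw [dotProduct_bracketg534, BFg534_eq_vecMulVec_sub_vecMulVec,
      vecMulVec_sub_vecMulVec_mulVec, dotProduct_sub, dotProduct_smul, dotProduct_smul,
      smul_eq_mul, smul_eq_mul, dotProduct_comm Y, dotProduct_comm Y]
    ring
  change (∀ Y, F ⬝ᵥ bracketg534 X Y = 0) ↔ _
  simp only [hskew, neg_eq_zero, dotProduct_comm _ (BFg534 F *ᵥ X), dotProduct_eq_zero_iff,
    LinearMap.mem_ker, mulVecLin_apply]

theorem linearIndependent_single_adX2Dual {F : Fin 5 → ℝ} (hF : adX2Dual F ≠ 0) :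
    LinearIndependent ℝ ![Pi.single 1 1, adX2Dual F] := by
  rw [LinearIndependent.pair_iff]
  intro s t hst
  have hs : s = 0 := by simpa [adX2Dual] using congrFun hst 1
  subst hs
  exact ⟨rfl, (smul_eq_zero.mp (by simpa using hst)).resolve_right hF⟩

/-- For every functional F, the skew-symmetric form B_F has rank 0 or 2; equivalently,
its radical {X | F([X, Y]) = 0 for all Y} has dimension 5 or 3 (the infinitesimal
MD-condition: every coadjoint orbit has dimension 0 or 2). -/
theorem md_condition_g534 (F : Fin 5 → ℝ) :
    ((BFg534 F).rank = 0 ∨ (BFg534 F).rank = 2) ∧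
    (Module.finrank ℝ (radg534 F) = 5 ∨ Module.finrank ℝ (radg534 F) = 3) := by
  have hnullity := rank_add_finrank_ker_mulVecLin (BFg534 F)
  rw [← radg534_eq_ker, Fintype.card_fin] at hnullity
  by_cases hF : adX2Dual F = 0
  · have hB : BFg534 F = 0 := by simp [BFg534_eq_vecMulVec_sub_vecMulVec, hF]
    rw [hB, rank_zero] at hnullity ⊢
    omega
  · have hB : (BFg534 F).rank = 2 :=
      BFg534_eq_vecMulVec_sub_vecMulVec F ▸
        rank_vecMulVec_sub_vecMulVec (linearIndependent_single_adX2Dual hF)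
    omega
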